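/- Let t, s, n be integers with 3 ≤ t ≤ s and n ≥ s+1. Let H be the {1,3}-graph on vertex set [n] whose singleton edges are {1},…,{t},{s+1} and whose 3-uniform edge set is [s]^{(3)} ∪ { {i_1, i_2, s+1} : {i_1,i_2} ∈ [t-1]^{(2)} } ∪ { {1, t, s+1} } (so that H has exactly C(s,3) + C(t-1,2) + 1 edges of size 3). Then λ'(H) > 1 + (t-1)(t-2)/t² = λ'(K_t^{{1,3}}). In particular, the legal weighting with x_1 = … = x_{t-1} = 1/t, x_t = x_{s+1} = 1/(2t), and all other coordinates 0 witnesses this strict inequality. -/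

import Mathlib

open Finset

/-- λ'(H,x) = Σ_{e∈E} |e|! · ∏_{i∈e} x_i  (equals Σ_{j∈R(H)} j!·Σ_{|e|=j} ∏ x_i). -/
noncomputable def lagPoly {n : ℕ} (E : Finset (Finset (Fin n))) (x : Fin n → ℝ) : ℝ :=
  ∑ e ∈ E, (Nat.factorial e.card : ℝ) * ∏ i ∈ e, x i

/-- A legal weighting: nonnegative entries summing to 1. -/
def isLegal {n : ℕ} (x : Fin n → ℝ) : Prop :=
  (∑ i, x i) = 1 ∧ ∀ i, 0 ≤ x i

/-- The Lagrangian λ'(H): the maximum of λ'(H,x) over legal weightings. -/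
noncomputable def lagrangian {n : ℕ} (E : Finset (Finset (Fin n))) : ℝ :=
  sSup {v : ℝ | ∃ x : Fin n → ℝ, isLegal x ∧ lagPoly E x = v}

/-- Edge set of the complete hypergraph K_t^R on vertex set [t]. -/
def completeEdges (t : ℕ) (R : Finset ℕ) : Finset (Finset (Fin t)) :=
  Finset.univ.filter (fun e => e.card ∈ R)

/-- S induces a complete R-subgraph: every subset of S with cardinality in R is an edge. -/
def isCompleteSub {n : ℕ} (E : Finset (Finset (Fin n))) (R : Finset ℕ) (S : Finset (Fin n)) : Prop :=
  ∀ e ⊆ S, e.card ∈ R → e ∈ E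

/-- The maximum complete R-subgraph of H has order t. -/
def maxCompleteOrder {n : ℕ} (E : Finset (Finset (Fin n))) (R : Finset ℕ) (t : ℕ) : Prop :=
  (∃ S, S.card = t ∧ isCompleteSub E R S) ∧ ∀ S, isCompleteSub E R S → S.card ≤ t

open scoped Nat

/-!
Splitting the weight `1/t` of vertex `t` of the uniform weighting of `K_t^{1,3}` equally between
`t` and the new vertex `s+1` leaves the value of the triples inside `[t]` unchanged, because each
triple `{i, j, t}` with `i, j < t` has the twin `{i, j, s+1}`; the extra triple `{1, t, s+1}`
then adds `6 · (1/t) · (1/(2t))² = 3/(2t³)`.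

On the simplex, `6 e₃(x) = 1 - Σ (3xᵢ² - 2xᵢ³)`, and for `t ≥ 4` each summand lies above its
tangent line at `1/t`; hence `λ'(K_t^{1,3}) = 1 + 6 C(t,3)/t³`, attained at the uniform weighting.
-/

section PowersetCardSums

variable {ι : Type*} (x : ι → ℝ)

theorem sum_prod_powersetCard_one (S : Finset ι) :
    ∑ e ∈ S.powersetCard 1, ∏ i ∈ e, x i = ∑ i ∈ S, x i := by
  simp [powersetCard_one]

theorem sum_prod_powersetCard_of_eq_const {S : Finset ι} {c : ℝ} (h : ∀ i ∈ S, x i = c)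
    (k : ℕ) : ∑ e ∈ S.powersetCard k, ∏ i ∈ e, x i = (#S).choose k * c ^ k := by
  rw [← card_powersetCard, ← nsmul_eq_mul, ← sum_const]
  refine sum_congr rfl fun e he => ?_
  obtain ⟨heS, rfl⟩ := mem_powersetCard.1 he
  exact prod_eq_pow_card fun i hi => h i (heS hi)

theorem sum_prod_powersetCard_of_subset {S T : Finset ι} (hTS : T ⊆ S)
    (h : ∀ i ∈ S, i ∉ T → x i = 0) (k : ℕ) :
    ∑ e ∈ T.powersetCard k, ∏ i ∈ e, x i = ∑ e ∈ S.powersetCard k, ∏ i ∈ e, x i := by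
  refine sum_subset (powersetCard_mono hTS) fun e he heT => ?_
  obtain ⟨heS, hek⟩ := mem_powersetCard.1 he
  obtain ⟨i, hie, hiT⟩ := not_subset.1 fun h' => heT (mem_powersetCard.2 ⟨h', hek⟩)
  exact prod_eq_zero hie (h i (heS hie) hiT)

variable [DecidableEq ι]

theorem insert_injOn_powersetCard {w : ι} {L : Finset ι} (hw : w ∉ L) (k : ℕ) :
    Set.InjOn (insert w) (L.powersetCard k : Set (Finset ι)) := by
  intro e he f hf hef
  have hwe : w ∉ e := fun h => hw ((mem_powersetCard.1 he).1 h)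
  have hwf : w ∉ f := fun h => hw ((mem_powersetCard.1 hf).1 h)
  rw [← erase_insert hwe, ← erase_insert hwf, hef]

theorem sum_prod_powersetCard_succ_insert {a : ι} {S : Finset ι} (ha : a ∉ S) (k : ℕ) :
    ∑ e ∈ (insert a S).powersetCard (k + 1), ∏ i ∈ e, x i =
      ∑ e ∈ S.powersetCard (k + 1), ∏ i ∈ e, x i + x a * ∑ e ∈ S.powersetCard k, ∏ i ∈ e, x i := by
  have haS : ∀ e ∈ S.powersetCard k, a ∉ e := fun e he hae => ha ((mem_powersetCard.1 he).1 hae)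
  rw [powersetCard_succ_insert ha, sum_union, sum_image (insert_injOn_powersetCard ha k), mul_sum]
  · exact congrArg _ (sum_congr rfl fun e he => prod_insert (haS e he))
  · refine disjoint_left.2 fun e he he' => ?_
    obtain ⟨f, -, rfl⟩ := mem_image.1 he'
    exact ha ((mem_powersetCard.1 he).1 (mem_insert_self a f))

theorem two_mul_sum_prod_powersetCard_two (S : Finset ι) :
    2 * ∑ e ∈ S.powersetCard 2, ∏ i ∈ e, x i = (∑ i ∈ S, x i) ^ 2 - ∑ i ∈ S, x i ^ 2 := by
  induction S using Finset.induction_on with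
  | empty => rw [powersetCard_eq_empty.2 (by simp)]; simp
  | insert a S ha ih =>
    rw [sum_prod_powersetCard_succ_insert x ha 1, sum_prod_powersetCard_one, sum_insert ha,
      sum_insert ha]
    linear_combination ih

theorem six_mul_sum_prod_powersetCard_three (S : Finset ι) :
    6 * ∑ e ∈ S.powersetCard 3, ∏ i ∈ e, x i =
      (∑ i ∈ S, x i) ^ 3 - 3 * (∑ i ∈ S, x i) * ∑ i ∈ S, x i ^ 2 + 2 * ∑ i ∈ S, x i ^ 3 := by
  induction S using Finset.induction_on with
  | empty => rw [powersetCard_eq_empty.2 (by simp)]; simp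
  | insert a S ha ih =>
    rw [sum_prod_powersetCard_succ_insert x ha 2, sum_insert ha, sum_insert ha, sum_insert ha]
    linear_combination ih + 3 * x a * two_mul_sum_prod_powersetCard_two x S

end PowersetCardSums

theorem Nat.cast_choose_three {K : Type*} [Field K] [CharZero K] (a : ℕ) :
    (a.choose 3 : K) = a * (a - 1) * (a - 2) / 6 := by
  induction a with
  | zero => simp
  | succ a ih =>
    rw [Nat.choose_succ_succ, Nat.cast_add, ih, Nat.cast_choose_two]
    push_cast
    ring

section Lagrangian

variable {n : ℕ}

theorem lagPoly_union {E F : Finset (Finset (Fin n))} (h : Disjoint E F) (x : Fin n → ℝ) :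
    lagPoly (E ∪ F) x = lagPoly E x + lagPoly F x :=
  sum_union h

theorem lagPoly_powersetCard (S : Finset (Fin n)) (k : ℕ) (x : Fin n → ℝ) :
    lagPoly (S.powersetCard k) x = k ! * ∑ e ∈ S.powersetCard k, ∏ i ∈ e, x i := by
  rw [lagPoly, mul_sum]
  exact sum_congr rfl fun e he => by rw [(mem_powersetCard.1 he).2]

theorem lagPoly_image_insert_powersetCard {L : Finset (Fin n)} {w : Fin n} (hw : w ∉ L)
    (k : ℕ) (x : Fin n → ℝ) :
    lagPoly ((L.powersetCard k).image (insert w)) x =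
      (k + 1)! * x w * ∑ e ∈ L.powersetCard k, ∏ i ∈ e, x i := by
  have hwe : ∀ e ∈ L.powersetCard k, w ∉ e := fun e he hwe => hw ((mem_powersetCard.1 he).1 hwe)
  rw [lagPoly, sum_image (insert_injOn_powersetCard hw k), mul_sum]
  refine sum_congr rfl fun e he => ?_
  rw [card_insert_of_notMem (hwe e he), (mem_powersetCard.1 he).2, prod_insert (hwe e he),
    mul_assoc]

theorem isLegal.le_one {x : Fin n → ℝ} (hx : isLegal x) (i : Fin n) : x i ≤ 1 :=
  hx.1 ▸ single_le_sum (fun j _ => hx.2 j) (mem_univ i)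

theorem lagPoly_le_sum_factorial (E : Finset (Finset (Fin n))) {x : Fin n → ℝ} (hx : isLegal x) :
    lagPoly E x ≤ ∑ e ∈ E, ((#e)! : ℝ) := by
  refine sum_le_sum fun e _ => mul_le_of_le_one_right (by positivity) ?_
  exact prod_le_one (fun i _ => hx.2 i) fun i _ => hx.le_one i

theorem lagPoly_le_lagrangian (E : Finset (Finset (Fin n))) {x : Fin n → ℝ} (hx : isLegal x) :
    lagPoly E x ≤ lagrangian E :=
  le_csSup ⟨_, by rintro _ ⟨y, hy, rfl⟩; exact lagPoly_le_sum_factorial E hy⟩ ⟨x, hx, rfl⟩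

end Lagrangian

theorem completeEdges_one_three (t : ℕ) :
    completeEdges t {1, 3} = (univ : Finset (Fin t)).powersetCard 1 ∪ univ.powersetCard 3 := by
  ext e
  simp [completeEdges, mem_powersetCard]

theorem lagPoly_completeEdges_one_three {t : ℕ} (x : Fin t → ℝ) :
    lagPoly (completeEdges t {1, 3}) x =
      ∑ i, x i + 6 * ∑ e ∈ (univ : Finset (Fin t)).powersetCard 3, ∏ i ∈ e, x i := by
  have hdisj : Disjoint ((univ : Finset (Fin t)).powersetCard 1) (univ.powersetCard 3) :=
    disjoint_left.2 fun e h1 h3 => by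
      have := (mem_powersetCard.1 h1).2.symm.trans (mem_powersetCard.1 h3).2
      omega
  rw [completeEdges_one_three, lagPoly_union hdisj, lagPoly_powersetCard, lagPoly_powersetCard,
    sum_prod_powersetCard_one]
  norm_num [Nat.factorial]

theorem cubic_ge_tangent_line {T y : ℝ} (hT : 4 ≤ T) (hy1 : y ≤ 1) :
    3 / T ^ 2 - 2 / T ^ 3 + (6 / T - 6 / T ^ 2) * (y - 1 / T) ≤ 3 * y ^ 2 - 2 * y ^ 3 := by
  have hT0 : 0 < T := by linarith
  have hfactor : 0 ≤ 3 - 4 / T - 2 * y := by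
    have : 4 / T ≤ 1 := (div_le_one hT0).2 hT
    linarith
  have key : 3 * y ^ 2 - 2 * y ^ 3 - (3 / T ^ 2 - 2 / T ^ 3 + (6 / T - 6 / T ^ 2) * (y - 1 / T)) =
      (y - 1 / T) ^ 2 * (3 - 4 / T - 2 * y) := by
    field_simp
    ring
  rw [← sub_nonneg, key]
  exact mul_nonneg (sq_nonneg _) hfactor

theorem sum_three_mul_sq_sub_two_mul_cube_ge {t : ℕ} (ht : 3 ≤ t) {x : Fin t → ℝ}
    (hx : isLegal x) : (3 * t - 2) / (t : ℝ) ^ 2 ≤ ∑ i, (3 * x i ^ 2 - 2 * x i ^ 3) := by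
  have hx1 := hx.le_one
  obtain ⟨hsum, hnonneg⟩ := hx
  obtain rfl | ht4 := ht.eq_or_lt
  · rw [Fin.sum_univ_three] at hsum ⊢
    have h0 := hnonneg 0
    have h1 := hnonneg 1
    have h2 := hnonneg 2
    norm_num
    nlinarith [mul_nonneg (mul_nonneg h0 h1) h2, mul_nonneg (sq_nonneg (x 0 - x 1)) h2,
      mul_nonneg (sq_nonneg (x 1 - x 2)) h0, mul_nonneg (sq_nonneg (x 0 - x 2)) h1]
  · have hT : (4 : ℝ) ≤ t := by exact_mod_cast ht4
    have hT0 : (t : ℝ) ≠ 0 := by positivity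
    calc (3 * t - 2) / (t : ℝ) ^ 2
        = ∑ i : Fin t,
            (3 / (t : ℝ) ^ 2 - 2 / (t : ℝ) ^ 3 + (6 / t - 6 / (t : ℝ) ^ 2) * (x i - 1 / t)) := by
          simp only [sum_add_distrib, sum_sub_distrib, ← mul_sum, hsum, sum_const, Finset.card_fin,
            nsmul_eq_mul]
          field_simp
          ring
      _ ≤ ∑ i, (3 * x i ^ 2 - 2 * x i ^ 3) :=
          sum_le_sum fun i _ => cubic_ge_tangent_line hT (hx1 i)

theorem six_mul_sum_prod_powersetCard_three_le {t : ℕ} (ht : 3 ≤ t) {x : Fin t → ℝ}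
    (hx : isLegal x) :
    6 * ∑ e ∈ (univ : Finset (Fin t)).powersetCard 3, ∏ i ∈ e, x i ≤
      ((t : ℝ) - 1) * ((t : ℝ) - 2) / (t : ℝ) ^ 2 := by
  have hpow := sum_three_mul_sq_sub_two_mul_cube_ge ht hx
  rw [sum_sub_distrib, ← mul_sum, ← mul_sum] at hpow
  have hT0 : (t : ℝ) ≠ 0 := by positivity
  have hbound : ((t : ℝ) - 1) * ((t : ℝ) - 2) / (t : ℝ) ^ 2 = 1 - (3 * t - 2) / (t : ℝ) ^ 2 := by
    field_simp
    ring
  rw [six_mul_sum_prod_powersetCard_three, hx.1, hbound]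
  linarith

theorem lagrangian_completeEdges_one_three {t : ℕ} (ht : 3 ≤ t) :
    lagrangian (completeEdges t {1, 3}) = 1 + ((t : ℝ) - 1) * ((t : ℝ) - 2) / (t : ℝ) ^ 2 := by
  have hT0 : (t : ℝ) ≠ 0 := by positivity
  refine IsGreatest.csSup_eq ⟨⟨fun _ => 1 / t, ⟨?_, fun _ => by positivity⟩, ?_⟩, ?_⟩
  · simp [hT0]
  · rw [lagPoly_completeEdges_one_three, sum_prod_powersetCard_of_eq_const _ (fun _ _ => rfl)]
    simp only [sum_const, Finset.card_fin, nsmul_eq_mul, Nat.cast_choose_three]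
    field_simp
  · rintro _ ⟨x, hx, rfl⟩
    rw [lagPoly_completeEdges_one_three, hx.1]
    linarith [six_mul_sum_prod_powersetCard_three_le ht hx]

section TripleEdges

variable {α : Type*} [DecidableEq α]

/-- The triples of the sharpness example, with `L = [t-1]`, `S = [s]`, `z = 1`, `u = t` and
`w = s+1`. -/
def tripleEdges (L S : Finset α) (z u w : α) : Finset (Finset α) :=
  S.powersetCard 3 ∪ (L.powersetCard 2).image (insert w) ∪ {{z, u, w}}

variable {L S : Finset α} {z u w : α}

theorem filter_card_succ_mem_erase_subset [Fintype α] (hw : w ∉ L) (k : ℕ) :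
    univ.filter (fun e : Finset α => #e = k + 1 ∧ w ∈ e ∧ e.erase w ⊆ L) =
      (L.powersetCard k).image (insert w) := by
  ext e
  simp only [mem_filter, mem_univ, true_and, mem_image, mem_powersetCard]
  constructor
  · rintro ⟨hcard, hwe, hsub⟩
    exact ⟨e.erase w, ⟨hsub, by rw [card_erase_of_mem hwe, hcard, Nat.add_sub_cancel]⟩,
      insert_erase hwe⟩
  · rintro ⟨f, ⟨hfL, rfl⟩, rfl⟩
    have hwf : w ∉ f := fun h => hw (hfL h)
    exact ⟨card_insert_of_notMem hwf, mem_insert_self w f, by rwa [erase_insert hwf]⟩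

theorem disjoint_powersetCard_image_insert (hw : w ∉ S) (k l : ℕ) :
    Disjoint (S.powersetCard k) ((L.powersetCard l).image (insert w)) :=
  disjoint_left.2 fun _ he he' => by
    obtain ⟨f, -, rfl⟩ := mem_image.1 he'
    exact hw ((mem_powersetCard.1 he).1 (mem_insert_self w f))

theorem triple_notMem_of_notMem (hu : u ∉ L) (huLS : insert u L ⊆ S) (hw : w ∉ S) :
    {z, u, w} ∉ S.powersetCard 3 ∪ (L.powersetCard 2).image (insert w) := by
  simp only [mem_union, mem_powersetCard, mem_image, not_or, not_exists, not_and]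
  refine ⟨fun h _ => hw (h (by simp)), fun f hf hfq => ?_⟩
  have huf : u ∈ f := by
    have hu' : u ∈ insert w f := hfq ▸ by simp
    exact (mem_insert.1 hu').resolve_left fun h => hw (h ▸ huLS (mem_insert_self u L))
  exact hu (hf.1 huf)

theorem card_triple (hz : z ∈ L) (hu : u ∉ L) (huLS : insert u L ⊆ S) (hw : w ∉ S) :
    #{z, u, w} = 3 := by
  have hzu : z ≠ u := by rintro rfl; exact hu hz
  have hzw : z ≠ w := by rintro rfl; exact hw (huLS (mem_insert_of_mem hz))
  have huw : u ≠ w := by rintro rfl; exact hw (huLS (mem_insert_self u L))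
  rw [card_insert_of_notMem (by simp [hzu, hzw]), card_pair huw]

theorem card_eq_three_of_mem_tripleEdges (hz : z ∈ L) (hu : u ∉ L) (huLS : insert u L ⊆ S)
    (hw : w ∉ S) {e : Finset α} (he : e ∈ tripleEdges L S z u w) : #e = 3 := by
  have hwL : w ∉ L := fun h => hw (huLS (mem_insert_of_mem h))
  simp only [tripleEdges, mem_union, mem_powersetCard, mem_image, mem_singleton] at he
  obtain (⟨-, he⟩ | ⟨f, ⟨hfL, hf⟩, rfl⟩) | rfl := he
  · exact he
  · rw [card_insert_of_notMem fun h => hwL (hfL h), hf]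
  · exact card_triple hz hu huLS hw

theorem card_tripleEdges (hu : u ∉ L) (huLS : insert u L ⊆ S) (hw : w ∉ S) :
    #(tripleEdges L S z u w) = (#S).choose 3 + (#L).choose 2 + 1 := by
  have hLS : L ⊆ S := (subset_insert u L).trans huLS
  have hwL : w ∉ L := fun h => hw (hLS h)
  rw [tripleEdges, card_union_of_disjoint (disjoint_singleton_right.2
      (triple_notMem_of_notMem hu huLS hw)),
    card_union_of_disjoint (disjoint_powersetCard_image_insert hw 3 2), card_powersetCard,
    card_image_of_injOn (insert_injOn_powersetCard hwL 2), card_powersetCard, card_singleton]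

theorem lagPoly_tripleEdges {n : ℕ} {L S : Finset (Fin n)} {z u w : Fin n} (hz : z ∈ L)
    (hu : u ∉ L) (huLS : insert u L ⊆ S) (hw : w ∉ S) (x : Fin n → ℝ) :
    lagPoly (tripleEdges L S z u w) x =
      6 * (∑ e ∈ S.powersetCard 3, ∏ i ∈ e, x i + x w * ∑ e ∈ L.powersetCard 2, ∏ i ∈ e, x i +
        x z * x u * x w) := by
  have hLS : L ⊆ S := (subset_insert u L).trans huLS
  have hzu : z ≠ u := by rintro rfl; exact hu hz
  have hzw : z ≠ w := by rintro rfl; exact hw (hLS hz)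
  have huw : u ≠ w := by rintro rfl; exact hw (huLS (mem_insert_self u L))
  rw [tripleEdges, lagPoly_union (disjoint_singleton_right.2 (triple_notMem_of_notMem hu huLS hw)),
    lagPoly_union (disjoint_powersetCard_image_insert hw 3 2), lagPoly_powersetCard,
    lagPoly_image_insert_powersetCard (fun h => hw (hLS h)), lagPoly, sum_singleton,
    card_triple hz hu huLS hw, prod_insert (by simp [hzu, hzw]), prod_pair huw]
  norm_num [Nat.factorial]
  ring

end TripleEdges

section SplitWeighting

variable {t s n : ℕ}

noncomputable def splitWeighting (t s n : ℕ) (v : Fin n) : ℝ :=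
  if (v : ℕ) < t - 1 then 1 / (t : ℝ)
  else if (v : ℕ) = t - 1 ∨ (v : ℕ) = s then 1 / (2 * (t : ℝ)) else 0

theorem splitWeighting_of_lt {v : Fin n} (hv : (v : ℕ) < t - 1) :
    splitWeighting t s n v = 1 / t :=
  if_pos hv

theorem splitWeighting_of_eq_sub_one {v : Fin n} (hv : (v : ℕ) = t - 1) :
    splitWeighting t s n v = 1 / (2 * t) := by
  simp [splitWeighting, hv]

theorem splitWeighting_of_eq {v : Fin n} (hts : t ≤ s) (hv : (v : ℕ) = s) :
    splitWeighting t s n v = 1 / (2 * t) := by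
  rw [splitWeighting, if_neg (by omega), if_pos (Or.inr hv)]

theorem splitWeighting_eq_zero {v : Fin n} (hvt : t - 1 < v) (hvs : (v : ℕ) ≠ s) :
    splitWeighting t s n v = 0 := by
  rw [splitWeighting, if_neg (by omega), if_neg (by omega)]

theorem splitWeighting_nonneg (v : Fin n) : 0 ≤ splitWeighting t s n v := by
  unfold splitWeighting
  split_ifs <;> positivity

theorem sum_splitWeighting_insert_Iic (ht : 1 ≤ t) (hts : t ≤ s) {u w : Fin n}
    (hu : (u : ℕ) = t - 1) (hw : (w : ℕ) = s) :
    ∑ v ∈ insert w (Iic u), splitWeighting t s n v = 1 := by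
  have hwu : w ∉ Iic u := by rw [mem_Iic, Fin.le_def]; omega
  have hT0 : (t : ℝ) ≠ 0 := by positivity
  rw [sum_insert hwu, ← Iio_insert, sum_insert Finset.notMem_Iio_self,
    sum_congr rfl fun v hv => splitWeighting_of_lt (by simpa [Fin.lt_def, hu] using hv),
    sum_const, Fin.card_Iio, hu, splitWeighting_of_eq hts hw, splitWeighting_of_eq_sub_one hu,
    nsmul_eq_mul, Nat.cast_sub ht]
  field_simp
  ring

theorem isLegal_splitWeighting (ht : 1 ≤ t) (hts : t ≤ s) (hsn : s < n) :
    isLegal (splitWeighting t s n) := by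
  refine ⟨?_, splitWeighting_nonneg⟩
  rw [← sum_subset (subset_univ (insert ⟨s, hsn⟩ (Iic ⟨t - 1, by omega⟩))),
    sum_splitWeighting_insert_Iic ht hts rfl rfl]
  intro v _ hv
  simp only [mem_insert, mem_Iic, Fin.le_def, Fin.ext_iff, not_or] at hv
  exact splitWeighting_eq_zero (by omega) hv.1

end SplitWeighting

section SharpExample

variable {t s n : ℕ}

theorem insert_Iio_subset_Iio {α : Type*} [LinearOrder α] [LocallyFiniteOrderBot α] {u w : α}
    (h : u < w) : insert u (Iio u) ⊆ Iio w := by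
  rw [Iio_insert]
  exact fun v hv => mem_Iio.2 ((mem_Iic.1 hv).trans_lt h)

def sharpEdges (t s n : ℕ) (hts : t ≤ s) (hsn : s < n) : Finset (Finset (Fin n)) :=
  (Finset.univ.filter (fun e : Finset (Fin n) =>
    e.card = 1 ∧ ∀ v ∈ e, (v : ℕ) < t ∨ (v : ℕ) = s)) ∪
  (Finset.univ.filter (fun e : Finset (Fin n) =>
    e.card = 3 ∧ ∀ v ∈ e, (v : ℕ) < s)) ∪
  (Finset.univ.filter (fun e : Finset (Fin n) =>
    e.card = 3 ∧ (⟨s, hsn⟩ : Fin n) ∈ e ∧ ∀ v ∈ e.erase (⟨s, hsn⟩ : Fin n), (v : ℕ) < t - 1)) ∪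
  {({⟨0, by omega⟩, ⟨t - 1, by omega⟩, ⟨s, hsn⟩} : Finset (Fin n))}

theorem sharpEdges_eq (ht : 1 ≤ t) (hts : t ≤ s) (hsn : s < n) {z u w : Fin n}
    (hz : (z : ℕ) = 0) (hu : (u : ℕ) = t - 1) (hw : (w : ℕ) = s) :
    sharpEdges t s n hts hsn =
      (insert w (Iic u)).powersetCard 1 ∪ tripleEdges (Iio u) (Iio w) z u w := by
  obtain rfl : z = ⟨0, Nat.zero_lt_of_lt hsn⟩ := Fin.ext hz
  obtain rfl : u = ⟨t - 1, (Nat.sub_le t 1).trans_lt (hts.trans_lt hsn)⟩ := Fin.ext hu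
  obtain rfl : w = ⟨s, hsn⟩ := Fin.ext hw
  rw [sharpEdges, tripleEdges, ← union_assoc, ← union_assoc,
    ← filter_card_succ_mem_erase_subset (by simp [Fin.lt_def]; omega) 2]
  congr 3 <;> ext e <;>
    simp [mem_powersetCard, subset_iff, Fin.lt_def, Fin.le_def, Fin.ext_iff,
      Nat.le_sub_one_iff_lt ht, or_comm, and_comm]

theorem card_filter_card_eq_three_sharpEdges (ht : 3 ≤ t) (hts : t ≤ s) (hsn : s < n) :
    #((sharpEdges t s n hts hsn).filter fun e => #e = 3) = s.choose 3 + (t - 1).choose 2 + 1 := by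
  set u : Fin n := ⟨t - 1, by omega⟩
  set w : Fin n := ⟨s, hsn⟩
  set z : Fin n := ⟨0, by omega⟩
  have hzL : z ∈ Iio u := by simp [z, u, Fin.lt_def]; omega
  have huS : insert u (Iio u) ⊆ Iio w := insert_Iio_subset_Iio (by simp [u, w, Fin.lt_def]; omega)
  rw [sharpEdges_eq (z := z) (u := u) (w := w) (by omega) hts hsn rfl rfl rfl, filter_union,
    filter_false_of_mem fun e he => by simp [(mem_powersetCard.1 he).2], empty_union,
    filter_true_of_mem fun e he =>
      card_eq_three_of_mem_tripleEdges hzL Finset.notMem_Iio_self huS Finset.notMem_Iio_self he,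
    card_tripleEdges Finset.notMem_Iio_self huS Finset.notMem_Iio_self, Fin.card_Iio, Fin.card_Iio]

theorem lagPoly_sharpEdges_splitWeighting (ht : 3 ≤ t) (hts : t ≤ s) (hsn : s < n) :
    lagPoly (sharpEdges t s n hts hsn) (splitWeighting t s n) =
      1 + ((t : ℝ) - 1) * ((t : ℝ) - 2) / (t : ℝ) ^ 2 + 3 / (2 * (t : ℝ) ^ 3) := by
  set u : Fin n := ⟨t - 1, by omega⟩
  set w : Fin n := ⟨s, hsn⟩
  set z : Fin n := ⟨0, by omega⟩
  set x := splitWeighting t s n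
  have hzL : z ∈ Iio u := by simp [z, u, Fin.lt_def]; omega
  have huS : insert u (Iio u) ⊆ Iio w := insert_Iio_subset_Iio (by simp [u, w, Fin.lt_def]; omega)
  have hxL : ∀ v ∈ Iio u, x v = 1 / t := fun v hv =>
    splitWeighting_of_lt (by simpa [u, Fin.lt_def] using hv)
  have hxu : x u = 1 / (2 * t) := splitWeighting_of_eq_sub_one rfl
  have hxw : x w = 1 / (2 * t) := splitWeighting_of_eq hts rfl
  have hx0 : ∀ v ∈ Iio w, v ∉ insert u (Iio u) → x v = 0 := by
    intro v hvw hvu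
    simp only [Iio_insert, mem_Iic, mem_Iio, Fin.le_def, Fin.lt_def, not_le] at hvw hvu
    exact splitWeighting_eq_zero hvu (by simp [w] at hvw; omega)
  have hdisj : Disjoint ((insert w (Iic u)).powersetCard 1) (tripleEdges (Iio u) (Iio w) z u w) :=
    disjoint_left.2 fun e h1 h3 => by
      have := (mem_powersetCard.1 h1).2.symm.trans
        (card_eq_three_of_mem_tripleEdges hzL Finset.notMem_Iio_self huS Finset.notMem_Iio_self h3)
      omega
  rw [sharpEdges_eq (z := z) (u := u) (w := w) (by omega) hts hsn rfl rfl rfl, lagPoly_union hdisj,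
    lagPoly_powersetCard, sum_prod_powersetCard_one,
    sum_splitWeighting_insert_Iic (by omega) hts rfl rfl,
    lagPoly_tripleEdges hzL Finset.notMem_Iio_self huS Finset.notMem_Iio_self,
    ← sum_prod_powersetCard_of_subset x huS hx0,
    sum_prod_powersetCard_succ_insert x Finset.notMem_Iio_self,
    sum_prod_powersetCard_of_eq_const x hxL, sum_prod_powersetCard_of_eq_const x hxL, hxL z hzL,
    hxu, hxw, Fin.card_Iio, Nat.cast_choose_two, Nat.cast_choose_three]
  have hT0 : (t : ℝ) ≠ 0 := by positivity
  simp only [u, Nat.cast_sub (by omega : 1 ≤ t), Nat.cast_one, Nat.factorial_one, Nat.reduceAdd]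
  field_simp
  ring

end SharpExample

/-- Sharpness of the edge bound in Theorem 7: the {1,3}-graph with singletons {1},…,{t},{s+1} and
3-edges [s]^(3) ∪ {{i₁,i₂,s+1} : {i₁,i₂} ∈ [t-1]^(2)} ∪ {{1,t,s+1}} (so with exactly
C(s,3)+C(t-1,2)+1 edges of size 3) has Lagrangian exceeding λ'(K_t^{1,3}). -/
theorem edge_bound_sharp (t s n : ℕ) (ht : 3 ≤ t) (hts : t ≤ s) (hn : s + 1 ≤ n)
    (E : Finset (Finset (Fin n)))
    (hE : E =
      (Finset.univ.filter (fun e : Finset (Fin n) =>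
        e.card = 1 ∧ ∀ v ∈ e, (v : ℕ) < t ∨ (v : ℕ) = s)) ∪
      (Finset.univ.filter (fun e : Finset (Fin n) =>
        e.card = 3 ∧ ∀ v ∈ e, (v : ℕ) < s)) ∪
      (Finset.univ.filter (fun e : Finset (Fin n) =>
        e.card = 3 ∧ (⟨s, by omega⟩ : Fin n) ∈ e ∧
          ∀ v ∈ e.erase (⟨s, by omega⟩ : Fin n), (v : ℕ) < t - 1)) ∪
      {({⟨0, by omega⟩, ⟨t - 1, by omega⟩, ⟨s, by omega⟩} : Finset (Fin n))}) :
    (E.filter (fun e => e.card = 3)).card = Nat.choose s 3 + Nat.choose (t - 1) 2 + 1 ∧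
    lagrangian E > 1 + ((t : ℝ) - 1) * ((t : ℝ) - 2) / (t : ℝ) ^ 2 ∧
    lagrangian (completeEdges t ({1, 3} : Finset ℕ)) =
      1 + ((t : ℝ) - 1) * ((t : ℝ) - 2) / (t : ℝ) ^ 2 ∧
    isLegal (fun v : Fin n => if (v : ℕ) < t - 1 then 1 / (t : ℝ)
      else if (v : ℕ) = t - 1 ∨ (v : ℕ) = s then 1 / (2 * (t : ℝ)) else 0) ∧
    lagPoly E (fun v : Fin n => if (v : ℕ) < t - 1 then 1 / (t : ℝ)
        else if (v : ℕ) = t - 1 ∨ (v : ℕ) = s then 1 / (2 * (t : ℝ)) else 0) >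
      1 + ((t : ℝ) - 1) * ((t : ℝ) - 2) / (t : ℝ) ^ 2 := by
  have hsn : s < n := by omega
  obtain rfl : E = sharpEdges t s n hts hsn := hE
  have hlegal : isLegal (splitWeighting t s n) := isLegal_splitWeighting (by omega) hts hsn
  have hgt : 1 + ((t : ℝ) - 1) * ((t : ℝ) - 2) / (t : ℝ) ^ 2 <
      lagPoly (sharpEdges t s n hts hsn) (splitWeighting t s n) := by
    rw [lagPoly_sharpEdges_splitWeighting ht hts hsn]
    have : (0 : ℝ) < 3 / (2 * (t : ℝ) ^ 3) := by positivity
    linarith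
  exact ⟨card_filter_card_eq_three_sharpEdges ht hts hsn,
    hgt.trans_le (lagPoly_le_lagrangian _ hlegal), lagrangian_completeEdges_one_three ht,
    hlegal, hgt⟩
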